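/- Let G = (V, E) be a finite directed graph and let r be an element not in V. Then G has a proper 3-coloring (a function c : V → {1,2,3} with c(u) ≠ c(v) for every edge (u,v) ∈ E) if and only if there exist three subsets F1, F2, F3 of V ∪ {r} such that: (a) for every vertex v ∈ V there is some k ∈ {1,2,3} with {r, v} ∩ Fk = ∅, and (b) for every edge (u, v) ∈ E and every k ∈ {1,2,3}, {r, u, v} ∩ Fk ≠ ∅. (This is the correctness of the reduction from 3-Coloring used to prove NP-hardness of consistency with a generalized Büchi condition of three sets, where {r,v} and {r,u,v} are the infinity sets induced by the sample words in the constructed transition system.) -/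
import Mathlib

/-- Correctness of the reduction from 3-Coloring used for the
NP-hardness of consistency with a generalized Büchi condition of three sets.
The ground set `V ∪ {r}` is modelled by `Option V`, the fresh element `r`
being `none` and each vertex `v` being `some v`.  A finite directed graph
`(V, E)` has a proper 3-coloring iff there are three subsets `F 1, F 2, F 3`
of `V ∪ {r}` such that (a) for every vertex `v` some `F k` is disjoint from
`{r, v}`, and (b) for every edge `(u, v)` every `F k` intersects
`{r, u, v}`. -/
theorem threeColoring_iff_genBuchi {V : Type*} [Fintype V] (E : Set (V × V)) :
    (∃ c : V → Fin 3, ∀ e ∈ E, c e.1 ≠ c e.2) ↔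
      ∃ F : Fin 3 → Set (Option V),
        (∀ v : V, ∃ k : Fin 3,
          ({none, some v} : Set (Option V)) ∩ F k = ∅) ∧
        (∀ e ∈ E, ∀ k : Fin 3,
          (({none, some e.1, some e.2} : Set (Option V)) ∩ F k).Nonempty) := by
  constructor
  · rintro ⟨c, hc⟩
    refine ⟨fun k => {x | ∃ v, x = some v ∧ c v ≠ k}, ?_, ?_⟩
    · intro v
      refine ⟨c v, ?_⟩
      ext x
      simp only [Set.mem_inter_iff, Set.mem_insert_iff, Set.mem_singleton_iff,
        Set.mem_setOf_eq, Set.mem_empty_iff_false, iff_false]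
      rintro ⟨h1 | h1, w, rfl, hw⟩
      · simp at h1
      · obtain rfl : v = w := by simpa using h1.symm
        exact hw rfl
    · intro e he k
      rcases ne_or_eq (c e.1) k with h | h
      · exact ⟨some e.1, by simp, e.1, rfl, h⟩
      · exact ⟨some e.2, by simp, e.2, rfl, h ▸ (hc e he).symm⟩
  · rintro ⟨F, ha, hb⟩
    choose c hcol using ha
    refine ⟨c, fun e he heq => ?_⟩
    obtain ⟨x, hx, hxF⟩ := hb e he (c e.1)
    have h1 := hcol e.1
    have h2 := hcol e.2
    rw [heq] at hxF
    rcases hx with rfl | rfl | rfl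
    · exact Set.eq_empty_iff_forall_notMem.mp h1 none ⟨by simp, heq ▸ hxF⟩
    · exact Set.eq_empty_iff_forall_notMem.mp h1 (some e.1) ⟨by simp, heq ▸ hxF⟩
    · exact Set.eq_empty_iff_forall_notMem.mp h2 (some e.2) ⟨by simp, hxF⟩
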